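/- Let I ⊆ ℝ be an open interval containing [0,∞), μ, σ : I → ℝ continuous with σ(z) > 0 on I, ρ > 0, and S' : I → (0,∞) a scale density with speed density m'. Let ψ, φ : I → ℝ be twice continuously differentiable solutions of the homogeneous equation with ψ(0) > 0, φ(0) > 0, ψ'(z) > 0 and φ'(z) < 0 for all z ∈ I, and suppose φ'(z)/S'(z) → 0 and ψ'(z)/S'(z) → +∞ as z → ∞. Let G : I → ℝ be twice continuously differentiable with G(0) < 0, write (LG)(z) = ½·σ(z)²·G''(z) + μ(z)·G'(z) − ρ·G(z), and assume there exists z̃ > 0 with (LG)(z) > 0 for 0 ≤ z < z̃, (LG)(z̃) = 0, and (LG)(z) < 0 for z > z̃, and there exist c > 0 and z₀ > z̃ with (LG)(z) ≤ −c for all z ≥ z₀. Define h(z) = ψ(0)·φ(z) − φ(0)·ψ(z) and A(z) = (G'(z)·h(z) − G(z)·h'(z))/S'(z). Then there exists exactly one b ∈ (0,∞) with A(b) = 0, and this b satisfies b > z̃. -/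

import Mathlib

/-!
`h = ψ(0)φ − φ(0)ψ` solves `Lh = 0`, vanishes at `0` and is strictly decreasing, so `h < 0` on
`(0, ∞)`. By Lagrange's identity `A' = (LG)·h·m'`, so `A` decreases on `[0, z̃]` and increases on
`[z̃, ∞)`, starting from `A(0) = −G(0)h'(0)/S'(0) < 0`. Eventually `LG ≤ −c`, which makes
`A + (c/ρ)·h'/S'` nondecreasing; since `h'/S' → −∞`, `A → ∞`, and the intermediate value theorem
gives the unique zero, which lies beyond `z̃`.
-/

open Filter Set Topology

theorem tendsto_sub_const_mul_atTop_of_monotoneOn {f g : ℝ → ℝ} {κ z₀ : ℝ} (hκ : 0 < κ)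
    (hf : MonotoneOn f (Ici z₀)) (hg : Tendsto g atTop atBot) :
    Tendsto (fun z => f z - κ * g z) atTop atTop := by
  simp only [sub_eq_add_neg]
  refine tendsto_atTop_add_left_of_le' _ (f z₀) ?_
    (tendsto_neg_atBot_atTop.comp (hg.const_mul_atBot hκ))
  filter_upwards [eventually_ge_atTop z₀] with z hz
  exact hf self_mem_Ici hz hz

theorem tendsto_const_mul_sub_const_mul_div_atBot {f g S : ℝ → ℝ} {p q : ℝ} (hq : 0 < q)
    (hf : Tendsto (fun z => f z / S z) atTop (𝓝 0))
    (hg : Tendsto (fun z => g z / S z) atTop atTop) :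
    Tendsto (fun z => (p * f z - q * g z) / S z) atTop atBot := by
  refine ((hf.const_mul p).add_atBot
    (tendsto_neg_atTop_atBot.comp (hg.const_mul_atTop hq))).congr fun z => ?_
  simp only [Function.comp_apply]
  ring

theorem lt_of_hasDerivAt_neg {f f' : ℝ → ℝ} {x y : ℝ} (hxy : x < y)
    (hf : ∀ z, x ≤ z → HasDerivAt f (f' z) z) (hf' : ∀ z, x < z → f' z < 0) : f y < f x :=
  strictAntiOn_of_hasDerivWithinAt_neg (convex_Ici x)
    (fun z hz => (hf z hz).continuousAt.continuousWithinAt)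
    (fun z hz => (hf z (interior_subset hz)).hasDerivWithinAt)
    (fun z hz => hf' z (by rwa [interior_Ici] at hz)) self_mem_Ici hxy.le hxy

theorem exists_pos_zero_unique_of_hasDerivAt {f f' : ℝ → ℝ} {t : ℝ} (ht : 0 ≤ t)
    (hf : ∀ z, 0 ≤ z → HasDerivAt f (f' z) z) (hdec : ∀ z ∈ Ioo 0 t, f' z < 0)
    (hinc : ∀ z, t < z → 0 < f' z) (h0 : f 0 < 0) (hlim : Tendsto f atTop atTop) :
    ∃ b, t < b ∧ f b = 0 ∧ ∀ b', 0 < b' → f b' = 0 → b' = b := by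
  have hcont : ContinuousOn f (Ici 0) := fun z hz => (hf z hz).continuousAt.continuousWithinAt
  have hanti : StrictAntiOn f (Icc 0 t) := by
    refine strictAntiOn_of_hasDerivWithinAt_neg (f' := f') (convex_Icc 0 t)
      (hcont.mono Icc_subset_Ici_self) (fun z hz => ?_) (fun z hz => ?_)
    all_goals rw [interior_Icc] at hz
    exacts [(hf z hz.1.le).hasDerivWithinAt, hdec z hz]
  have hmono : StrictMonoOn f (Ici t) := by
    refine strictMonoOn_of_hasDerivWithinAt_pos (f' := f') (convex_Ici t)
      (hcont.mono (Ici_subset_Ici.2 ht)) (fun z hz => ?_) (fun z hz => ?_)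
    all_goals rw [interior_Ici] at hz
    exacts [(hf z (ht.trans hz.le)).hasDerivWithinAt, hinc z hz]
  have hft : f t < 0 :=
    (hanti.antitoneOn (left_mem_Icc.2 ht) (right_mem_Icc.2 ht) ht).trans_lt h0
  obtain ⟨z₁, hfz₁, htz₁⟩ := ((hlim.eventually_gt_atTop 0).and (eventually_ge_atTop t)).exists
  obtain ⟨b, hb, hfb⟩ := intermediate_value_Icc htz₁
    (hcont.mono (Icc_subset_Ici_iff htz₁ |>.2 ht)) ⟨hft.le, hfz₁.le⟩
  have htb : t < b := hb.1.lt_of_ne (by rintro rfl; exact hft.ne hfb)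
  refine ⟨b, htb, hfb, fun b' hb' hfb' => ?_⟩
  rcases le_or_gt b' t with hb't | htb'
  · have := hanti (left_mem_Icc.2 ht) ⟨hb'.le, hb't⟩ hb'
    linarith
  · exact hmono.injOn htb'.le htb.le (hfb'.trans hfb.symm)

noncomputable def diffusionOp (σ μ : ℝ → ℝ) (ρ : ℝ) (u u' u'' : ℝ → ℝ) (z : ℝ) : ℝ :=
  σ z ^ 2 / 2 * u'' z + μ z * u' z - ρ * u z

noncomputable def speedDensity (σ S : ℝ → ℝ) (z : ℝ) : ℝ :=
  2 / (σ z ^ 2 * S z)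

theorem speedDensity_pos {σ S : ℝ → ℝ} {z : ℝ} (hσ : 0 < σ z) (hS : 0 < S z) :
    0 < speedDensity σ S z :=
  div_pos two_pos (mul_pos (pow_pos hσ 2) hS)

section Wronskian

variable {μ σ S G G' G'' u u' u'' : ℝ → ℝ} {ρ : ℝ}

-- Lagrange's identity for `L`, written with the scale density `S` and speed density `m'`.
theorem hasDerivAt_wronskian_div_scale {z : ℝ}
    (hσ : σ z ≠ 0) (hS₀ : S z ≠ 0) (hS : HasDerivAt S (-(2 * μ z / σ z ^ 2) * S z) z)
    (hG : HasDerivAt G (G' z) z) (hG' : HasDerivAt G' (G'' z) z)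
    (hu : HasDerivAt u (u' z) z) (hu' : HasDerivAt u' (u'' z) z) :
    HasDerivAt (fun x => (G' x * u x - G x * u' x) / S x)
      ((diffusionOp σ μ ρ G G' G'' z * u z - G z * diffusionOp σ μ ρ u u' u'' z) *
        speedDensity σ S z) z := by
  have hnum : HasDerivAt (fun x => G' x * u x - G x * u' x)
      (G'' z * u z + G' z * u' z - (G' z * u' z + G z * u'' z)) z :=
    (hG'.mul hu).sub (hG.mul hu')
  refine (hnum.div hS hS₀).congr_deriv ?_
  simp only [diffusionOp, speedDensity]
  field_simp
  ring

theorem hasDerivAt_wronskian_div_scale_of_homogeneous {z : ℝ} (hσ : 0 < σ z) (hS₀ : 0 < S z)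
    (hS : HasDerivAt S (-(2 * μ z / σ z ^ 2) * S z) z)
    (hG : HasDerivAt G (G' z) z) (hG' : HasDerivAt G' (G'' z) z)
    (hu : HasDerivAt u (u' z) z) (hu' : HasDerivAt u' (u'' z) z)
    (hhom : diffusionOp σ μ ρ u u' u'' z = 0) :
    HasDerivAt (fun x => (G' x * u x - G x * u' x) / S x)
      (diffusionOp σ μ ρ G G' G'' z * u z * speedDensity σ S z) z := by
  simpa [hhom] using hasDerivAt_wronskian_div_scale (ρ := ρ) hσ.ne' hS₀.ne' hS hG hG' hu hu'

/-- `(G'u − Gu')/S'` is `B − (c/ρ)·u'/S'`, where `B`, the same expression for `G − c/ρ`, is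
nondecreasing on `[z₀, ∞)` because `L(G − c/ρ) = LG + c ≤ 0` and `u < 0`. -/
theorem tendsto_wronskian_div_scale_atTop {D : Set ℝ} {c z₀ : ℝ} (hD : Ici z₀ ⊆ D)
    (hρ : 0 < ρ) (hc : 0 < c) (hσ : ∀ z ∈ D, 0 < σ z) (hS₀ : ∀ z ∈ D, 0 < S z)
    (hS : ∀ z ∈ D, HasDerivAt S (-(2 * μ z / σ z ^ 2) * S z) z)
    (hG : ∀ z ∈ D, HasDerivAt G (G' z) z) (hG' : ∀ z ∈ D, HasDerivAt G' (G'' z) z)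
    (hu : ∀ z ∈ D, HasDerivAt u (u' z) z) (hu' : ∀ z ∈ D, HasDerivAt u' (u'' z) z)
    (hhom : ∀ z ∈ D, diffusionOp σ μ ρ u u' u'' z = 0) (hneg : ∀ z, z₀ ≤ z → u z < 0)
    (hLG : ∀ z, z₀ ≤ z → diffusionOp σ μ ρ G G' G'' z ≤ -c)
    (hlim : Tendsto (fun z => u' z / S z) atTop atBot) :
    Tendsto (fun z => (G' z * u z - G z * u' z) / S z) atTop atTop := by
  have hBd : ∀ z, z₀ ≤ z → HasDerivAt (fun x => (G' x * u x - (G x - c / ρ) * u' x) / S x)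
      (diffusionOp σ μ ρ (fun x => G x - c / ρ) G' G'' z * u z * speedDensity σ S z) z :=
    fun z hz => hasDerivAt_wronskian_div_scale_of_homogeneous (hσ z (hD hz)) (hS₀ z (hD hz))
      (hS z (hD hz)) ((hG z (hD hz)).sub_const _) (hG' z (hD hz)) (hu z (hD hz)) (hu' z (hD hz))
      (hhom z (hD hz))
  have hB : MonotoneOn (fun x => (G' x * u x - (G x - c / ρ) * u' x) / S x) (Ici z₀) := by
    refine monotoneOn_of_hasDerivWithinAt_nonneg (convex_Ici z₀)
      (fun z hz => (hBd z hz).continuousAt.continuousWithinAt)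
      (fun z hz => (hBd z (interior_subset hz)).hasDerivWithinAt) (fun z hz => ?_)
    rw [interior_Ici, mem_Ioi] at hz
    have hL : diffusionOp σ μ ρ (fun x => G x - c / ρ) G' G'' z ≤ 0 := by
      have := hLG z hz.le
      simp only [diffusionOp] at this ⊢
      field_simp
      linarith
    exact mul_nonneg (mul_nonneg_of_nonpos_of_nonpos hL (hneg z hz.le).le)
      (speedDensity_pos (hσ z (hD hz.le)) (hS₀ z (hD hz.le))).le
  refine (tendsto_sub_const_mul_atTop_of_monotoneOn (div_pos hc hρ) hB hlim).congr fun z => ?_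
  ring

end Wronskian

theorem stmt_12_general (a : ℝ) (ha : a < 0) (μ σ S ψ ψ' ψ'' φ φ' φ'' G G' G'' : ℝ → ℝ)
    (ρ : ℝ) (hρ : 0 < ρ)
    (hσpos : ∀ z ∈ Set.Ioi a, 0 < σ z)
    (hSpos : ∀ z ∈ Set.Ioi a, 0 < S z)
    (hS : ∀ z ∈ Set.Ioi a, HasDerivAt S (-(2 * μ z / (σ z) ^ 2) * S z) z)
    (hψ : ∀ z ∈ Set.Ioi a, HasDerivAt ψ (ψ' z) z)
    (hψ' : ∀ z ∈ Set.Ioi a, HasDerivAt ψ' (ψ'' z) z)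
    (hφ : ∀ z ∈ Set.Ioi a, HasDerivAt φ (φ' z) z)
    (hφ' : ∀ z ∈ Set.Ioi a, HasDerivAt φ' (φ'' z) z)
    (hψhom : ∀ z ∈ Set.Ioi a, (σ z) ^ 2 / 2 * ψ'' z + μ z * ψ' z - ρ * ψ z = 0)
    (hφhom : ∀ z ∈ Set.Ioi a, (σ z) ^ 2 / 2 * φ'' z + μ z * φ' z - ρ * φ z = 0)
    (hψ0 : 0 < ψ 0) (hφ0 : 0 < φ 0)
    (hψ'pos : ∀ z ∈ Set.Ioi a, 0 < ψ' z)
    (hφ'neg : ∀ z ∈ Set.Ioi a, φ' z < 0)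
    (hφlim : Filter.Tendsto (fun z => φ' z / S z) Filter.atTop (nhds 0))
    (hψlim : Filter.Tendsto (fun z => ψ' z / S z) Filter.atTop Filter.atTop)
    (hG : ∀ z ∈ Set.Ioi a, HasDerivAt G (G' z) z)
    (hG' : ∀ z ∈ Set.Ioi a, HasDerivAt G' (G'' z) z)
    (hG0 : G 0 < 0)
    (ztil : ℝ) (hztil : 0 < ztil)
    (hLpos : ∀ z : ℝ, 0 ≤ z → z < ztil →
      0 < (σ z) ^ 2 / 2 * G'' z + μ z * G' z - ρ * G z)
    (hLneg : ∀ z : ℝ, ztil < z →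
      (σ z) ^ 2 / 2 * G'' z + μ z * G' z - ρ * G z < 0)
    (hLbdd : ∃ c > (0:ℝ), ∃ z₀ > ztil, ∀ z : ℝ, z₀ ≤ z →
      (σ z) ^ 2 / 2 * G'' z + μ z * G' z - ρ * G z ≤ -c) :
    ∃ b : ℝ, 0 < b ∧ ztil < b ∧
      (G' b * (ψ 0 * φ b - φ 0 * ψ b) - G b * (ψ 0 * φ' b - φ 0 * ψ' b)) / S b = 0 ∧
      ∀ b' : ℝ, 0 < b' →
        (G' b' * (ψ 0 * φ b' - φ 0 * ψ b')
          - G b' * (ψ 0 * φ' b' - φ 0 * ψ' b')) / S b' = 0 → b' = b := by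
  have hI : Ici 0 ⊆ Ioi a := fun z hz => ha.trans_le hz
  set h := fun z => ψ 0 * φ z - φ 0 * ψ z
  set h' := fun z => ψ 0 * φ' z - φ 0 * ψ' z
  set h'' := fun z => ψ 0 * φ'' z - φ 0 * ψ'' z
  have hh : ∀ z ∈ Ioi a, HasDerivAt h (h' z) z := fun z hz =>
    ((hφ z hz).const_mul _).sub ((hψ z hz).const_mul _)
  have hh' : ∀ z ∈ Ioi a, HasDerivAt h' (h'' z) z := fun z hz =>
    ((hφ' z hz).const_mul _).sub ((hψ' z hz).const_mul _)
  have hhom : ∀ z ∈ Ioi a, diffusionOp σ μ ρ h h' h'' z = 0 := fun z hz => by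
    simp only [diffusionOp, h, h', h'']
    linear_combination ψ 0 * hφhom z hz - φ 0 * hψhom z hz
  have hh'neg : ∀ z ∈ Ioi a, h' z < 0 := fun z hz => by
    nlinarith [hψ'pos z hz, hφ'neg z hz]
  have hhneg : ∀ z, 0 < z → h z < 0 := fun z hz => by
    simpa [h, mul_comm] using
      lt_of_hasDerivAt_neg hz (fun y hy => hh y (hI hy)) fun y hy => hh'neg y (hI hy.le)
  have hm : ∀ z, 0 ≤ z → 0 < speedDensity σ S z := fun z hz =>
    speedDensity_pos (hσpos z (hI hz)) (hSpos z (hI hz))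
  have hA : ∀ z ∈ Ioi a, HasDerivAt (fun x => (G' x * h x - G x * h' x) / S x)
      (diffusionOp σ μ ρ G G' G'' z * h z * speedDensity σ S z) z := fun z hz =>
    hasDerivAt_wronskian_div_scale_of_homogeneous (hσpos z hz) (hSpos z hz) (hS z hz)
      (hG z hz) (hG' z hz) (hh z hz) (hh' z hz) (hhom z hz)
  have hA0 : (G' 0 * h 0 - G 0 * h' 0) / S 0 < 0 := by
    have hh0 : h 0 = 0 := by simp only [h]; ring
    rw [hh0, mul_zero, zero_sub]
    exact div_neg_of_neg_of_pos
      (neg_neg_of_pos (mul_pos_of_neg_of_neg hG0 (hh'neg 0 (hI self_mem_Ici))))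
      (hSpos 0 (hI self_mem_Ici))
  obtain ⟨c, hc, z₀, hz₀, hLc⟩ := hLbdd
  have hz₀pos : 0 < z₀ := hztil.trans hz₀
  have hAlim := tendsto_wronskian_div_scale_atTop ((Ici_subset_Ici.2 hz₀pos.le).trans hI)
    hρ hc hσpos hSpos hS hG hG' hh hh' hhom (fun z hz => hhneg z (hz₀pos.trans_le hz)) hLc
    (tendsto_const_mul_sub_const_mul_div_atBot hφ0 hφlim hψlim)
  obtain ⟨b, hb, hAb, huniq⟩ := exists_pos_zero_unique_of_hasDerivAt hztil.le
    (fun z hz => hA z (hI hz))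
    (fun z hz => mul_neg_of_neg_of_pos
      (mul_neg_of_pos_of_neg (hLpos z hz.1.le hz.2) (hhneg z hz.1)) (hm z hz.1.le))
    (fun z hz => mul_pos
      (mul_pos_of_neg_of_neg (hLneg z hz) (hhneg z (hztil.trans hz))) (hm z (hztil.trans hz).le))
    hA0 hAlim
  exact ⟨b, hztil.trans hb, hb, hAb, huniq⟩

/-- On an open interval `I = (a, ∞)` containing `[0,∞)` (i.e. `a < 0`),
under the stated hypotheses on `ψ, φ, G` and the sign/limit conditions on
`(LG)(z) = ½σ(z)²·G''(z) + μ(z)·G'(z) − ρ·G(z)`, the equation `A(b) = 0`, where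
`h(z) = ψ(0)·φ(z) − φ(0)·ψ(z)` and `A(z) = (G'(z)·h(z) − G(z)·h'(z))/S'(z)`, has
exactly one solution `b ∈ (0,∞)`, and this solution satisfies `b > z̃`. -/
theorem stmt_12 (a : ℝ) (ha : a < 0) (μ σ S ψ ψ' ψ'' φ φ' φ'' G G' G'' : ℝ → ℝ)
    (ρ : ℝ) (hρ : 0 < ρ)
    (hμ : ContinuousOn μ (Set.Ioi a))
    (hσ : ContinuousOn σ (Set.Ioi a))
    (hσpos : ∀ z ∈ Set.Ioi a, 0 < σ z)
    (hSpos : ∀ z ∈ Set.Ioi a, 0 < S z)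
    (hS : ∀ z ∈ Set.Ioi a, HasDerivAt S (-(2 * μ z / (σ z) ^ 2) * S z) z)
    (hψ : ∀ z ∈ Set.Ioi a, HasDerivAt ψ (ψ' z) z)
    (hψ' : ∀ z ∈ Set.Ioi a, HasDerivAt ψ' (ψ'' z) z)
    (hψ''c : ContinuousOn ψ'' (Set.Ioi a))
    (hφ : ∀ z ∈ Set.Ioi a, HasDerivAt φ (φ' z) z)
    (hφ' : ∀ z ∈ Set.Ioi a, HasDerivAt φ' (φ'' z) z)
    (hφ''c : ContinuousOn φ'' (Set.Ioi a))
    (hψhom : ∀ z ∈ Set.Ioi a, (σ z) ^ 2 / 2 * ψ'' z + μ z * ψ' z - ρ * ψ z = 0)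
    (hφhom : ∀ z ∈ Set.Ioi a, (σ z) ^ 2 / 2 * φ'' z + μ z * φ' z - ρ * φ z = 0)
    (hψ0 : 0 < ψ 0) (hφ0 : 0 < φ 0)
    (hψ'pos : ∀ z ∈ Set.Ioi a, 0 < ψ' z)
    (hφ'neg : ∀ z ∈ Set.Ioi a, φ' z < 0)
    (hφlim : Filter.Tendsto (fun z => φ' z / S z) Filter.atTop (nhds 0))
    (hψlim : Filter.Tendsto (fun z => ψ' z / S z) Filter.atTop Filter.atTop)
    (hG : ∀ z ∈ Set.Ioi a, HasDerivAt G (G' z) z)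
    (hG' : ∀ z ∈ Set.Ioi a, HasDerivAt G' (G'' z) z)
    (hG''c : ContinuousOn G'' (Set.Ioi a))
    (hG0 : G 0 < 0)
    (ztil : ℝ) (hztil : 0 < ztil)
    (hLpos : ∀ z : ℝ, 0 ≤ z → z < ztil →
      0 < (σ z) ^ 2 / 2 * G'' z + μ z * G' z - ρ * G z)
    (hLzero : (σ ztil) ^ 2 / 2 * G'' ztil + μ ztil * G' ztil - ρ * G ztil = 0)
    (hLneg : ∀ z : ℝ, ztil < z →
      (σ z) ^ 2 / 2 * G'' z + μ z * G' z - ρ * G z < 0)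
    (hLbdd : ∃ c > (0:ℝ), ∃ z₀ > ztil, ∀ z : ℝ, z₀ ≤ z →
      (σ z) ^ 2 / 2 * G'' z + μ z * G' z - ρ * G z ≤ -c) :
    ∃ b : ℝ, 0 < b ∧ ztil < b ∧
      (G' b * (ψ 0 * φ b - φ 0 * ψ b) - G b * (ψ 0 * φ' b - φ 0 * ψ' b)) / S b = 0 ∧
      ∀ b' : ℝ, 0 < b' →
        (G' b' * (ψ 0 * φ b' - φ 0 * ψ b')
          - G b' * (ψ 0 * φ' b' - φ 0 * ψ' b')) / S b' = 0 → b' = b :=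
  stmt_12_general a ha μ σ S ψ ψ' ψ'' φ φ' φ'' G G' G'' ρ hρ hσpos hSpos hS hψ hψ' hφ hφ' hψhom
    hφhom hψ0 hφ0 hψ'pos hφ'neg hφlim hψlim hG hG' hG0 ztil hztil hLpos hLneg hLbdd
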